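/- arXiv:2208.08662 — 3 statements merged into one kernel-verified Lean document; each statement's English description precedes it below -/
import Mathlib

section
/- For every real x with 0.5 ≤ x < 1, we have 0.8277·x² − 2.046·x + 2.223 − 0.0048 − 1/√x < 0. -/
theorem error_bound (x : ℝ) (h1 : 0.5 ≤ x) (h2 : x < 1) :
    0.8277 * x ^ 2 - 2.046 * x + 2.223 - 0.0048 - 1 / Real.sqrt x < 0 := by
  set s := Real.sqrt x with hs
  have hx0 : (0:ℝ) < x := by linarith
  have hs0 : 0 < s := Real.sqrt_pos.mpr hx0
  have hs2 : s ^ 2 = x := Real.sq_sqrt hx0.le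
  have hs1 : s < 1 := by nlinarith [hs2]
  have hslb : s ^ 2 ≥ 0.5 := by rw [hs2]; exact h1
  have hq : 0.8277*s^4 + 0.8277*s^3 - 1.2183*s^2 - 1.2183*s + 0.9999 > 0 := by
    nlinarith [sq_nonneg (s^2 + 0.5*s - 0.93), sq_nonneg (s - 0.79),
      mul_nonneg (sub_nonneg.mpr hs1.le) (by linarith : s^2 - 0.5 ≥ 0),
      mul_nonneg (mul_nonneg (sub_nonneg.mpr hs1.le) (sub_nonneg.mpr hs1.le)) hs0.le,
      sq_nonneg (s^2 - 0.79), hs0.le]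
  rw [sub_neg, lt_div_iff₀ hs0, ← hs2]
  nlinarith [mul_nonneg (sub_nonneg.mpr hs1.le) hq.le, hs2]
end

section
/- Let T be a positive natural number, C > 0, ε > 0, δ ∈ (0,1), and σ² ≥ T·C²·(ε + 2·log(1/δ))/ε². Then with λ = 1 + 2·log(1/δ)/ε, we have T·C²·λ/(2σ²) + log(1/δ)/(λ − 1) ≤ ε. -/
theorem privacy_accounting (T : ℕ) (C ε δ σ l : ℝ)
    (hT : 0 < T) (hC : 0 < C) (hε : 0 < ε) (hδ0 : 0 < δ) (hδ1 : δ < 1)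
    (hσ : σ ^ 2 ≥ (T : ℝ) * C ^ 2 * (ε + 2 * Real.log (1 / δ)) / ε ^ 2)
    (hl : l = 1 + 2 * Real.log (1 / δ) / ε) :
    (T : ℝ) * C ^ 2 * l / (2 * σ ^ 2) + Real.log (1 / δ) / (l - 1) ≤ ε := by
  have hL : 0 < Real.log (1 / δ) := Real.log_pos (one_lt_one_div hδ0 hδ1)
  set L := Real.log (1 / δ) with hLdef
  have hTpos : (0:ℝ) < (T : ℝ) := by exact_mod_cast hT
  have hσ2 : 0 < σ ^ 2 := lt_of_lt_of_le (by positivity) hσ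
  have h2 : L / (l - 1) = ε / 2 := by
    rw [hl]; field_simp; ring
  rw [h2, hl]
  have hkey : (T : ℝ) * C ^ 2 * (ε + 2 * L) ≤ ε ^ 2 * σ ^ 2 := by
    have := (div_le_iff₀ (by positivity : (0:ℝ) < ε ^ 2)).mp hσ
    linarith [this]
  rw [div_add_div _ _ (by positivity : (2 * σ ^ 2 : ℝ) ≠ 0) (two_ne_zero)]
  rw [div_le_iff₀ (by positivity)]
  have hexp : (T : ℝ) * C ^ 2 * (1 + 2 * L / ε) = (T : ℝ) * C ^ 2 * (ε + 2 * L) / ε := by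
    field_simp
  have h3 : (T : ℝ) * C ^ 2 * (ε + 2 * L) / ε ≤ ε * σ ^ 2 := by
    rw [div_le_iff₀ hε]
    nlinarith [hkey]
  nlinarith [hexp, h3, hσ2]
end

section
/- For every real x ∈ [0.5, 1), the approximation error 1/√x − (0.8277x² − 2.046x + 2.2182) is strictly positive and at least 0.0001. -/
theorem approx_error_lower_bound (x : ℝ) (h1 : 0.5 ≤ x) (h2 : x < 1) :
    0 < 1 / Real.sqrt x - (0.8277 * x ^ 2 - 2.046 * x + 2.2182) ∧
    0.0001 ≤ 1 / Real.sqrt x - (0.8277 * x ^ 2 - 2.046 * x + 2.2182) := by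
  have hx0 : (0:ℝ) < x := by linarith
  have hs0 : 0 < Real.sqrt x := Real.sqrt_pos.mpr hx0
  have hsx : Real.sqrt x ^ 2 = x := Real.sq_sqrt hx0.le
  have hppos : 0 < 0.8277 * x ^ 2 - 2.046 * x + 2.2182 + 0.0001 := by
    nlinarith [sq_nonneg x, sq_nonneg (x - 1)]
  have hkey : x * (0.8277 * x ^ 2 - 2.046 * x + 2.2182 + 0.0001) ^ 2 ≤ 1 := by
    nlinarith [mul_nonneg (sub_nonneg.mpr h2.le) (sq_nonneg (x - 0.617)),
      mul_nonneg (mul_nonneg (sub_nonneg.mpr h2.le) (sub_nonneg.mpr h1)) (sq_nonneg (x - 0.617)),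
      mul_nonneg (mul_nonneg (sub_nonneg.mpr h2.le) (sub_nonneg.mpr h2.le)) (sq_nonneg (x - 0.617)),
      mul_nonneg (sub_nonneg.mpr h2.le) (mul_nonneg (sq_nonneg (x - 0.617)) hx0.le),
      mul_nonneg (mul_nonneg (sub_nonneg.mpr h2.le) (sub_nonneg.mpr h1)) (sub_nonneg.mpr h2.le)]
  have hsp : Real.sqrt x * (0.8277 * x ^ 2 - 2.046 * x + 2.2182 + 0.0001) ≤ 1 := by
    nlinarith [mul_pos hs0 hppos,
      sq_nonneg (Real.sqrt x * (0.8277 * x ^ 2 - 2.046 * x + 2.2182 + 0.0001) - 1)]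
  have h4 : 0.8277 * x ^ 2 - 2.046 * x + 2.2182 + 0.0001 ≤ 1 / Real.sqrt x := by
    rw [le_div_iff₀ hs0]; nlinarith
  constructor <;> nlinarith
end
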